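/- A ring R is pseudopolar (every element pseudopolar) if and only if R is both strongly π-rad clean and quasipolar. -/
import Mathlib


variable {R : Type*} [Ring R]

def qnil (a : R) : Prop := ∀ x : R, a * x = x * a → IsUnit (1 + a * x)

def inComm2 (a x : R) : Prop := ∀ y : R, y * a = a * y → x * y = y * x

def IsQuasipolarElem (a : R) : Prop :=
  ∃ p : R, p * p = p ∧ inComm2 a p ∧ IsUnit (a + p) ∧ qnil (a * p)

def inQ (a : R) : Prop := ∃ p : R, p + a - p * a = 0 ∧ a + p - a * p = 0

def inQN (a : R) : Prop := ∀ x : R, a * x = x * a → inQ (a * x)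

/-- membership in the Jacobson radical -/
def memJ (a : R) : Prop := ∀ x y : R, IsUnit (1 - x * a * y)

def IsStrReg (a : R) : Prop := ∃ b : R, a * b = b * a ∧ a = a * b * a

lemma memJ_mul_right' {a : R} (h : memJ a) (d : R) : memJ (a * d) := fun x y => by
  simpa [mul_assoc] using h x (d * y)

lemma memJ_mul_left' {a : R} (h : memJ a) (d : R) : memJ (d * a) := fun x y => by
  simpa [mul_assoc] using h (x * d) y

lemma idem_pow' {p : R} (hp : p * p = p) : ∀ {k : ℕ}, 0 < k → p ^ k = p := by
  intro k hk
  induction k with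
  | zero => omega
  | succ n ih =>
    rcases Nat.eq_zero_or_pos n with h0 | h0
    · simp [h0]
    · rw [pow_succ, ih h0, hp]

lemma memJ_neg_pow_mul' {a p : R} {k : ℕ} (h : memJ ((-a) ^ k * p)) : memJ (a ^ k * p) := by
  have hone : ((-1 : R) ^ k) * ((-1 : R) ^ k) = 1 := by
    rw [← pow_add, ← two_mul, pow_mul, neg_one_sq, one_pow]
  have e1 : (-a) ^ k * p = (-1 : R) ^ k * (a ^ k * p) := by
    rw [neg_pow, mul_assoc]
  intro x y
  have := h (x * (-1 : R) ^ k) y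
  rw [e1] at this
  have e2 : x * (-1 : R) ^ k * ((-1 : R) ^ k * (a ^ k * p)) = x * (a ^ k * p) := by
    rw [mul_assoc x, ← mul_assoc ((-1 : R) ^ k), hone, one_mul]
  rwa [e2] at this

lemma isUnit_right_of_comm' {a b : R} (h : a * b = b * a) (hu : IsUnit (a * b)) : IsUnit b :=
  ((Commute.isUnit_mul_iff h).mp hu).2

lemma qnil_of_pow_memJ' {b : R} {k : ℕ} (h : memJ (b ^ k)) : qnil b := by
  intro x hx
  set t := b * x with ht
  have hc : Commute b x := hx
  have hs : IsUnit (1 - (-t) ^ k) := by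
    have e1 : (-t) ^ k = (-1 : R) ^ k * (b ^ k * x ^ k) := by
      rw [neg_pow, hc.mul_pow]
    rw [e1]
    simpa [mul_assoc] using h ((-1 : R) ^ k) (x ^ k)
  have hcomm : (∑ i ∈ Finset.range k, (-t) ^ i) * (1 - (-t))
      = (1 - (-t)) * (∑ i ∈ Finset.range k, (-t) ^ i) :=
    (Commute.sum_left _ _ _ fun i _ =>
      (Commute.one_right ((-t) ^ i)).sub_right ((Commute.refl (-t)).pow_left i)).eq
  have hprod : (∑ i ∈ Finset.range k, (-t) ^ i) * (1 - (-t)) = 1 - (-t) ^ k := by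
    have h1 := geom_sum_mul (-t) k
    have h2 : (∑ i ∈ Finset.range k, (-t) ^ i) * (1 - (-t))
        = -((∑ i ∈ Finset.range k, (-t) ^ i) * ((-t) - 1)) := by
      rw [mul_sub, mul_sub, mul_one]; abel
    rw [h2, h1, neg_sub]
  have hu : IsUnit ((∑ i ∈ Finset.range k, (-t) ^ i) * (1 - (-t))) := by rw [hprod]; exact hs
  have := isUnit_right_of_comm' hcomm hu
  rwa [sub_neg_eq_add] at this

lemma idem_eq_zero_of_isUnit_one_sub' {q : R} (hq : q * q = q) (h : IsUnit (1 - q)) : q = 0 := by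
  obtain ⟨u, hu⟩ := h
  have h0 : q * (1 - q) = 0 := by rw [mul_sub, mul_one, hq, sub_self]
  calc q = q * ((1 - q) * ↑u⁻¹) := by rw [← hu, Units.mul_inv, mul_one]
    _ = (q * (1 - q)) * ↑u⁻¹ := by rw [mul_assoc]
    _ = 0 := by rw [h0, zero_mul]

lemma idem_mul_one_sub' {e p : R} (hee : e * e = e) (hpp : p * p = p) (hpe : p * e = e * p) :
    (e * (1 - p)) * (e * (1 - p)) = e * (1 - p) := by
  have hs : (1 - p) * (1 - p) = 1 - p := by
    rw [mul_sub, mul_one, sub_mul, one_mul, hpp]; abel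
  have hse : (1 - p) * e = e * (1 - p) := by
    rw [sub_mul, one_mul, hpe, mul_sub, mul_one]
  rw [mul_assoc, ← mul_assoc (1 - p), hse, mul_assoc e (1 - p), hs, ← mul_assoc, hee]

lemma pow_mul_eq_of_mul_eq' {x y q : R} (hq : q * q = q) (hx : Commute x q) (hy : Commute y q)
    (hxy : x * q = y * q) {n : ℕ} (hn : 0 < n) : x ^ n * q = y ^ n * q := by
  have hqn : q ^ n = q := idem_pow' hq hn
  calc x ^ n * q = x ^ n * q ^ n := by rw [hqn]
    _ = (x * q) ^ n := (hx.mul_pow n).symm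
    _ = (y * q) ^ n := by rw [hxy]
    _ = y ^ n * q ^ n := hy.mul_pow n
    _ = y ^ n * q := by rw [hqn]

theorem stmt19 :
    (∀ a : R, ∃ p : R, ∃ k : ℕ, 0 < k ∧ p * p = p ∧ inComm2 a p ∧ IsUnit (a + p) ∧
        memJ (a ^ k * p))
    ↔ (∀ a : R, ∃ e : R, ∃ n : ℕ, 0 < n ∧ e * e = e ∧ a * e = e * a ∧ IsUnit (a - e) ∧
          memJ (a ^ n * e)) ∧
      (∀ a : R, IsQuasipolarElem a) := by
  constructor
  · intro h
    refine ⟨fun a => ?_, fun a => ?_⟩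
    · obtain ⟨p, k, hk, hpp, hcomm, hu, hJ⟩ := h (-a)
      refine ⟨p, k, hk, hpp, ?_, ?_, memJ_neg_pow_mul' hJ⟩
      · exact (hcomm a (by rw [mul_neg, neg_mul])).symm
      · have := hu.neg
        rwa [show -(-a + p) = a - p by abel] at this
    · obtain ⟨p, k, hk, hpp, hcomm, hu, hJ⟩ := h a
      refine ⟨p, hpp, hcomm, hu, ?_⟩
      have hpa : p * a = a * p := hcomm a rfl
      have hpow : (a * p) ^ k = a ^ k * p := by
        rw [(show Commute a p from hpa.symm).mul_pow, idem_pow' hpp hk]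
      exact qnil_of_pow_memJ' (by rw [hpow]; exact hJ)
  · rintro ⟨hS, hQ⟩ a
    obtain ⟨p, hpp, hcomm, hv, hqn⟩ := hQ a
    obtain ⟨e, n, hn, hee, hea', hu', hJ'⟩ := hS (-a)
    have hea : a * e = e * a := by
      have : -(a * e) = -(e * a) := by rw [← neg_mul, ← mul_neg, hea']
      exact neg_inj.mp this
    have hu : IsUnit (a + e) := by
      have := hu'.neg
      rwa [show -(-a - e) = a + e by abel] at this
    have hJ : memJ (a ^ n * e) := memJ_neg_pow_mul' hJ'
    have hpa : p * a = a * p := hcomm a rfl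
    have hpe : p * e = e * p := hcomm e hea.symm
    -- Claim A : e * (1 - p) = 0, i.e. e = e * p
    have hep : e = e * p := by
      set q := e * (1 - p) with hqdef
      have hq2 : q * q = q := idem_mul_one_sub' hee hpp hpe
      have hps : p * (1 - p) = 0 := by rw [mul_sub, mul_one, hpp, sub_self]
      have hpq : p * q = 0 := by rw [hqdef, ← mul_assoc, hpe, mul_assoc, hps, mul_zero]
      have has : a * (1 - p) = (1 - p) * a := by
        rw [mul_sub, mul_one, sub_mul, one_mul, hpa]
      have haq : Commute a q := by
        show a * q = q * a
        rw [hqdef, ← mul_assoc, hea, mul_assoc, has, ← mul_assoc, mul_assoc]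
      have hqp : q * p = 0 := by
        rw [hqdef, mul_assoc, sub_mul, one_mul, hpp, sub_self, mul_zero]
      have hvqc : Commute (a + p) q := by
        show (a + p) * q = q * (a + p)
        rw [add_mul, mul_add, hpq, hqp, add_zero, add_zero, haq.eq]
      have hvq : (a + p) * q = a * q := by rw [add_mul, hpq, add_zero]
      have hpowJ : memJ (a ^ n * q) := by
        have h3 : a ^ n * q = (a ^ n * e) * (1 - p) := by rw [hqdef, mul_assoc]
        rw [h3]; exact memJ_mul_right' hJ _
      have hvpow : (a + p) ^ n * q = a ^ n * q := pow_mul_eq_of_mul_eq' hq2 hvqc haq hvq hn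
      have hvpowJ : memJ ((a + p) ^ n * q) := by rw [hvpow]; exact hpowJ
      obtain ⟨V, hV⟩ := hv
      have hqJ : memJ q := by
        have h1 : ((↑(V⁻¹ ^ n) : R)) * ((a + p) ^ n * q) = q := by
          rw [← mul_assoc, ← hV, ← Units.val_pow_eq_pow_val, ← Units.val_mul]
          have : V⁻¹ ^ n * V ^ n = 1 := by simp
          rw [this, Units.val_one, one_mul]
        have h2 := memJ_mul_left' hvpowJ ((↑(V⁻¹ ^ n) : R))
        rwa [h1] at h2
      have hq0 : q = 0 := idem_eq_zero_of_isUnit_one_sub' hq2 (by simpa using hqJ 1 1)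
      have h4 : e - e * p = 0 := by
        have h5 : e - e * p = q := by rw [hqdef, mul_sub, mul_one]
        rw [h5, hq0]
      exact (sub_eq_zero.mp h4)
    -- Claim B : p * (1 - e) = 0, i.e. p = p * e
    have hpe' : p = p * e := by
      set r := p * (1 - e) with hrdef
      have hr2 : r * r = r := idem_mul_one_sub' hpp hee hpe.symm
      have hes : e * (1 - e) = 0 := by rw [mul_sub, mul_one, hee, sub_self]
      have her : e * r = 0 := by rw [hrdef, ← mul_assoc, ← hpe, mul_assoc, hes, mul_zero]
      have hase : a * (1 - e) = (1 - e) * a := by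
        rw [mul_sub, mul_one, sub_mul, one_mul, hea]
      have har : a * r = r * a := by
        rw [hrdef, ← mul_assoc, ← hpa, mul_assoc, hase, ← mul_assoc, mul_assoc]
      have hur : (a + e) * r = a * r := by rw [add_mul, her, add_zero]
      obtain ⟨U, hU⟩ := hu
      have hcua : Commute a (↑U⁻¹ : R) := by
        refine Commute.units_inv_right ?_
        show a * ↑U = ↑U * a
        rw [hU, mul_add, add_mul, hea]
      have hcup : Commute p (↑U⁻¹ : R) := by
        refine Commute.units_inv_right ?_
        show p * ↑U = ↑U * p
        rw [hU, mul_add, add_mul, hpa, hpe]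
      set w := (↑U⁻¹ : R) * r with hwdef
      have hpr : p * r = r := by rw [hrdef, ← mul_assoc, hpp]
      have huir : (↑U⁻¹ : R) * ((a + e) * r) = r := by
        rw [← mul_assoc, ← hU, Units.inv_mul, one_mul]
      have hapw : (a * p) * w = r := by
        rw [hwdef, mul_assoc, ← mul_assoc p, hcup.eq, mul_assoc, hpr, ← mul_assoc,
          hcua.eq, mul_assoc, ← hur, huir]
      have hrp : r * p = r := by
        have hsp : (1 - e) * p = p * (1 - e) := by
          rw [sub_mul, one_mul, ← hpe, mul_sub, mul_one]
        rw [hrdef, mul_assoc, hsp, ← mul_assoc, hpp]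
      have hwap : w * (a * p) = r := by
        rw [hwdef, mul_assoc, ← mul_assoc r, ← har, ← mul_assoc, ← hur, huir, hrp]
      have hcomm2 : (a * p) * (-w) = (-w) * (a * p) := by
        rw [mul_neg, neg_mul, hapw, hwap]
      have h8 : IsUnit (1 - r) := by
        have := hqn (-w) hcomm2
        rwa [mul_neg, hapw, ← sub_eq_add_neg] at this
      have hr0 : r = 0 := idem_eq_zero_of_isUnit_one_sub' hr2 h8
      have h9 : p - p * e = 0 := by
        have h10 : p - p * e = r := by rw [hrdef, mul_sub, mul_one]
        rw [h10, hr0]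
      exact (sub_eq_zero.mp h9)
    have hpeq : p = e := by
      calc p = p * e := hpe'
        _ = e * p := hpe
        _ = e := hep.symm
    refine ⟨p, n, hn, hpp, hcomm, hv, ?_⟩
    rw [hpeq]
    exact hJ
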